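/- arXiv:2011.03101 — 2 statements merged into one kernel-verified Lean document; each statement's English description precedes it below -/
import Mathlib

section
/- For every integer n ≥ 1, B_{n-1} = (-1)^n * sum over k from 1 to n of S(n,k) * (k!/k^2) * (-1)^k. -/
/-- Stirling numbers of the second kind. -/
def S2 : ℕ → ℕ → ℕ
  | 0, 0 => 1
  | 0, _ + 1 => 0
  | _ + 1, 0 => 0
  | n + 1, k + 1 => (k + 1) * S2 n (k + 1) + S2 n k

open Finset

lemma S2_zero_right (n : ℕ) : S2 n 0 = if n = 0 then 1 else 0 := by
  cases n <;> simp [S2]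

lemma S2_eq_zero : ∀ {n k : ℕ}, n < k → S2 n k = 0 := by
  intro n
  induction n with
  | zero => intro k hk; match k, hk with | (j+1), _ => simp [S2]
  | succ m ih =>
    intro k hk
    match k, hk with
    | (j+1), hk =>
      have h1 : m < j := Nat.lt_of_succ_lt_succ hk
      simp [S2, ih (Nat.lt_succ_of_lt h1), ih h1]

lemma S2_one (n : ℕ) : S2 (n + 1) 1 = 1 := by
  induction n with
  | zero => simp [S2]
  | succ m ih =>
    rw [show S2 (m + 1 + 1) 1 = 1 * S2 (m + 1) 1 + S2 (m + 1) 0 from rfl, ih, S2_zero_right]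
    simp

/-- Pascal-style splitting of a binomial-weighted sum. -/
lemma sum_pascal (n : ℕ) (a : ℕ → ℚ) :
    ∑ k ∈ range (n + 2), (Nat.choose (n + 1) k : ℚ) * a k
      = ∑ k ∈ range (n + 1), (Nat.choose n k : ℚ) * a k
        + ∑ k ∈ range (n + 1), (Nat.choose n k : ℚ) * a (k + 1) := by
  rw [Finset.sum_range_succ' (fun k => (Nat.choose (n + 1) k : ℚ) * a k) (n + 1)]
  rw [Finset.sum_range_succ' (fun k => (Nat.choose n k : ℚ) * a k) n]
  have h : ∀ k, (Nat.choose (n + 1) (k + 1) : ℚ) * a (k + 1)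
      = (Nat.choose n k : ℚ) * a (k + 1) + (Nat.choose n (k + 1) : ℚ) * a (k + 1) := by
    intro k
    rw [Nat.choose_succ_succ]
    push_cast
    ring
  rw [Finset.sum_congr rfl fun k _ => h k, Finset.sum_add_distrib]
  have h2 : ∑ k ∈ range (n + 1), (Nat.choose n (k + 1) : ℚ) * a (k + 1)
      = ∑ k ∈ range n, (Nat.choose n (k + 1) : ℚ) * a (k + 1) := by
    rw [Finset.sum_range_succ]
    simp [Nat.choose_succ_self]
  rw [h2]
  simp [Nat.choose_zero_right]
  ring

/-- Binomial transform of Stirling numbers. -/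
lemma stirling_binom (n : ℕ) : ∀ j : ℕ,
    (S2 (n + 1) (j + 1) : ℚ) = ∑ k ∈ range (n + 1), (Nat.choose n k : ℚ) * S2 k j := by
  induction n with
  | zero =>
    intro j
    simp [S2]
  | succ m ih =>
    intro j
    rw [sum_pascal]
    cases j with
    | zero =>
      have hz : ∀ k, (S2 (k + 1) 0 : ℚ) = 0 := by intro k; simp [S2]
      have h1 : ∑ k ∈ range (m + 1), (Nat.choose m k : ℚ) * S2 (k + 1) 0 = 0 := by
        apply Finset.sum_eq_zero; intro k _; rw [hz]; ring
      have h2 : ∑ k ∈ range (m + 1), (Nat.choose m k : ℚ) * S2 k 0 = 1 := by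
        rw [Finset.sum_eq_single 0]
        · simp [S2]
        · intro k _ hk
          match k, hk with
          | (j+1), _ => simp [S2]
        · simp
      rw [h1, h2, S2_one (m + 1)]
      norm_num
    | succ i =>
      have hrec : ∀ k, (S2 (k + 1) (i + 1) : ℚ) = (i + 1) * S2 k (i + 1) + S2 k i := by
        intro k; push_cast [S2]; ring
      have h1 : ∑ k ∈ range (m + 1), (Nat.choose m k : ℚ) * S2 (k + 1) (i + 1)
          = (i + 1) * ∑ k ∈ range (m + 1), (Nat.choose m k : ℚ) * S2 k (i + 1)
            + ∑ k ∈ range (m + 1), (Nat.choose m k : ℚ) * S2 k i := by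
        rw [Finset.mul_sum, ← Finset.sum_add_distrib]
        apply Finset.sum_congr rfl
        intro k _
        rw [hrec k]
        ring
      rw [h1, ← ih (i + 1), ← ih i]
      have : (S2 (m + 1 + 1) (i + 1 + 1) : ℚ)
          = (i + 2) * S2 (m + 1) (i + 2) + S2 (m + 1) (i + 1) := by
        push_cast [S2]; ring
      rw [this]
      ring

/-- The weight appearing in the classical formula. -/
noncomputable def wgt (j : ℕ) : ℚ := (-1) ^ j * (Nat.factorial j : ℚ) / (j + 1)

/-- Classical candidate for the Bernoulli number. -/
noncomputable def Cc (n : ℕ) : ℚ := ∑ j ∈ range (n + 1), wgt j * S2 n j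

/-- The shifted sum. -/
noncomputable def Uu (n : ℕ) : ℚ := ∑ j ∈ range n, wgt j * S2 n (j + 1)

/-- Alternating factorial-Stirling sum (the "log" identity). -/
lemma alt_sum (n : ℕ) :
    ∑ j ∈ range (n + 1), (-1 : ℚ) ^ j * (Nat.factorial j : ℚ) * S2 n (j + 1)
      = if n = 1 then 1 else 0 := by
  cases n with
  | zero => simp [S2]
  | succ m =>
    set g : ℕ → ℚ := fun j => (-1 : ℚ) ^ j * (Nat.factorial j : ℚ) * S2 m j with hg
    have hstep : ∀ j, (-1 : ℚ) ^ j * (Nat.factorial j : ℚ) * S2 (m + 1) (j + 1)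
        = -g (j + 1) + g j := by
      intro j
      simp only [hg]
      push_cast [S2, Nat.factorial_succ]
      ring
    rw [Finset.sum_congr rfl fun j _ => hstep j, Finset.sum_add_distrib]
    have h1 : ∑ j ∈ range (m + 2), -g (j + 1) = -(∑ j ∈ range (m + 3), g j) + g 0 := by
      rw [Finset.sum_neg_distrib, Finset.sum_range_succ' g (m + 2)]
      ring
    have h2 : ∑ j ∈ range (m + 2), g j = ∑ j ∈ range (m + 3), g j := by
      rw [Finset.sum_range_succ g (m + 2)]
      have : S2 m (m + 2) = 0 := S2_eq_zero (by omega)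
      simp [hg, this]
    rw [h1, h2]
    have hg0 : g 0 = if m = 0 then 1 else 0 := by
      simp [hg, S2_zero_right]
    rw [hg0]
    rcases eq_or_ne m 0 with rfl | hm
    · norm_num
    · rw [if_neg hm, if_neg (show ¬ m + 1 = 1 by omega)]
      ring

lemma Uu_succ (n : ℕ) : Uu (n + 1) = Cc n + (if n = 1 then 1 else 0) := by
  rw [Uu, Cc]
  have hstep : ∀ j : ℕ, wgt j * S2 (n + 1) (j + 1)
      = (-1 : ℚ) ^ j * (Nat.factorial j : ℚ) * S2 n (j + 1) + wgt j * S2 n j := by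
    intro j
    have hj : ((j : ℚ) + 1) ≠ 0 := by positivity
    rw [wgt]
    push_cast [S2]
    field_simp
  rw [Finset.sum_congr rfl fun j _ => hstep j, Finset.sum_add_distrib, alt_sum]
  ring

lemma sum_choose_Cc (n : ℕ) :
    ∑ k ∈ range n, (Nat.choose n k : ℚ) * Cc k = if n = 1 then 1 else 0 := by
  have full : ∑ k ∈ range (n + 1), (Nat.choose n k : ℚ) * Cc k = Uu (n + 1) := by
    have hCc : ∀ k ∈ range (n + 1), (Nat.choose n k : ℚ) * Cc k
        = ∑ j ∈ range (n + 1), (Nat.choose n k : ℚ) * (wgt j * S2 k j) := by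
      intro k hk
      rw [Cc, Finset.mul_sum]
      apply Finset.sum_subset
      · intro x hx
        simp only [mem_range] at hx hk ⊢
        omega
      · intro x _ hx
        simp only [mem_range, not_lt] at hx
        have : S2 k x = 0 := S2_eq_zero (by omega)
        rw [this]
        push_cast
        ring
    rw [Finset.sum_congr rfl hCc, Finset.sum_comm]
    rw [Uu]
    apply Finset.sum_congr rfl
    intro j _
    rw [stirling_binom n j, Finset.mul_sum]
    apply Finset.sum_congr rfl
    intro k _
    ring
  have hsplit : ∑ k ∈ range (n + 1), (Nat.choose n k : ℚ) * Cc k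
      = (∑ k ∈ range n, (Nat.choose n k : ℚ) * Cc k) + Cc n := by
    rw [Finset.sum_range_succ]
    simp
  rw [hsplit, Uu_succ] at full
  linarith [full]

lemma Cc_eq_bernoulli : ∀ n : ℕ, Cc n = bernoulli n := by
  intro n
  induction n using Nat.strong_induction_on with
  | _ n ih =>
    have h1 := sum_choose_Cc (n + 1)
    have h2 := sum_bernoulli (n + 1)
    rw [Finset.sum_range_succ] at h1 h2
    have h3 : ∑ k ∈ range n, (Nat.choose (n + 1) k : ℚ) * Cc k
        = ∑ k ∈ range n, (Nat.choose (n + 1) k : ℚ) * bernoulli k := by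
      apply Finset.sum_congr rfl
      intro k hk
      rw [ih k (mem_range.mp hk)]
    rw [h3] at h1
    have h4 : (Nat.choose (n + 1) n : ℚ) * Cc n = (Nat.choose (n + 1) n : ℚ) * bernoulli n := by
      linarith [h1, h2]
    have h5 : (Nat.choose (n + 1) n : ℚ) ≠ 0 := by
      rw [Nat.choose_succ_self_right]
      exact_mod_cast Nat.succ_ne_zero n
    exact mul_left_cancel₀ h5 h4

theorem bernoulli_eq_stirling2_div_sq (n : ℕ) (hn : 1 ≤ n) :
    bernoulli (n - 1) =
      (-1) ^ n *
        ∑ k ∈ Finset.Icc 1 n,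
          (S2 n k : ℚ) * ((Nat.factorial k : ℚ) / (k ^ 2 : ℚ)) * (-1) ^ k := by
  obtain ⟨m, rfl⟩ : ∃ m, n = m + 1 := ⟨n - 1, by omega⟩
  simp only [Nat.add_sub_cancel]
  have hIcc : ∑ k ∈ Finset.Icc 1 (m + 1),
      (S2 (m + 1) k : ℚ) * ((Nat.factorial k : ℚ) / (k ^ 2 : ℚ)) * (-1) ^ k
      = -Uu (m + 1) := by
    rw [← Finset.Ico_add_one_right_eq_Icc, Finset.sum_Ico_eq_sum_range]
    have : m + 1 + 1 - 1 = m + 1 := by rfl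
    rw [this, Uu, ← Finset.sum_neg_distrib]
    apply Finset.sum_congr rfl
    intro i _
    have hi : ((i : ℚ) + 1) ≠ 0 := by positivity
    have h1i : (1 + i) = (i + 1) := by omega
    rw [h1i, wgt]
    push_cast [Nat.factorial_succ]
    field_simp
    ring
  rw [hIcc, Uu_succ, Cc_eq_bernoulli]
  rcases Nat.even_or_odd m with he | ho
  · have h1 : (-1 : ℚ) ^ (m + 1) = -1 := by
      rw [pow_succ, he.neg_one_pow]
      norm_num
    have hm1 : m ≠ 1 := by
      intro h; rw [h] at he; exact (Nat.not_even_iff_odd.mpr odd_one) he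
    rw [h1, if_neg hm1]
    ring
  · have h1 : (-1 : ℚ) ^ (m + 1) = 1 := by
      rw [pow_succ, ho.neg_one_pow]
      norm_num
    rw [h1]
    by_cases hm1 : m = 1
    · subst hm1
      rw [bernoulli_one]
      norm_num
    · have hb : bernoulli m = 0 := by
        rw [bernoulli_eq_bernoulli'_of_ne_one hm1]
        exact bernoulli'_eq_zero_of_odd ho (by rcases ho with ⟨t, rfl⟩; omega)
      rw [hb, if_neg hm1]
      ring
end

section
/- For every nonnegative integer n, (-1)^n * sum over k from 0 to n of S(n,k) * (-1)^k * D_k equals sum over k from 0 to n of binomial(n,k) * (-1)^k * b_k, where D_k are derangement numbers and b_k are Bell numbers. -/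
/-- Bell numbers. -/
def bell (m : ℕ) : ℕ := ∑ k ∈ Finset.range (m + 1), S2 m k

/-!
Both sides satisfy the same first-order recurrence. For `L n = ∑ S(n,k) (-1)^k D_k`, the Stirling
recursion `S(n+1,k+1) = (k+1) S(n,k+1) + S(n,k)` moves the weight `k` onto the summand, and
`(-1)^(k+1) D_(k+1) = 1 - (k+1) (-1)^k D_k` then gives `L (n+1) = b_n - L n`. For
`R n = ∑ C(n,k) (-1)^k b_k`, Pascal's rule gives `R (n+1) - R n = -∑ C(n,k) (-1)^k b_(k+1)`, and
since `b_(k+1) = ∑ C(k,m) b_m`, binomial inversion evaluates this to `(-1)^(n+1) b_n`.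
-/

open Finset

theorem S2_eq_stirlingSecond : S2 = Nat.stirlingSecond := by
  funext n k
  induction n generalizing k with
  | zero => cases k <;> rfl
  | succ n ih => cases k <;> simp [S2, Nat.stirlingSecond, ih]

namespace Nat

theorem sum_range_stirlingSecond_succ_mul {R : Type*} [CommSemiring R] (n : ℕ) (f : ℕ → R) :
    ∑ k ∈ range (n + 2), (stirlingSecond (n + 1) k : R) * f k =
      ∑ k ∈ range (n + 1), (stirlingSecond n k : R) * (k * f k + f (k + 1)) := by
  have hshift :
      ∑ k ∈ range (n + 1), ((k + 1 : ℕ) : R) * stirlingSecond n (k + 1) * f (k + 1) =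
        ∑ k ∈ range (n + 1), (k : R) * stirlingSecond n k * f k := by
    rw [sum_range_succ _ n, sum_range_succ' _ n, stirlingSecond_eq_zero_of_lt (lt_add_one n)]
    simp
  calc ∑ k ∈ range (n + 2), (stirlingSecond (n + 1) k : R) * f k
      = ∑ k ∈ range (n + 1), (stirlingSecond (n + 1) (k + 1) : R) * f (k + 1) := by
        simp [sum_range_succ' _ (n + 1)]
    _ = ∑ k ∈ range (n + 1), ((k + 1 : ℕ) : R) * stirlingSecond n (k + 1) * f (k + 1) +
          ∑ k ∈ range (n + 1), (stirlingSecond n k : R) * f (k + 1) := by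
        rw [← sum_add_distrib]
        refine sum_congr rfl fun k _ => ?_
        rw [stirlingSecond_succ_succ]
        push_cast
        ring
    _ = _ := by
        rw [hshift, ← sum_add_distrib]
        exact sum_congr rfl fun k _ => by ring

theorem stirlingSecond_succ_succ_eq_sum_choose (n k : ℕ) :
    stirlingSecond (n + 1) (k + 1) = ∑ m ∈ range (n + 1), n.choose m * stirlingSecond m k := by
  induction n generalizing k with
  | zero => simp [stirlingSecond_succ_succ]
  | succ n ih =>
    have hshift : ∑ m ∈ range (n + 1), n.choose m * stirlingSecond (m + 1) k =
        k * stirlingSecond (n + 1) (k + 1) + stirlingSecond (n + 1) k := by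
      cases k with
      | zero => simp
      | succ j =>
        rw [ih, ih, mul_sum, ← sum_add_distrib]
        exact sum_congr rfl fun m _ => by rw [stirlingSecond_succ_succ]; ring
    have hpascal := sum_choose_succ_mul (R := ℕ) (fun m _ => stirlingSecond m k) n
    simp only [cast_id] at hpascal
    rw [hpascal, ← ih, hshift, stirlingSecond_succ_succ (n + 1) k]
    ring

end Nat

theorem bell_eq_sum_stirlingSecond_of_le {m n : ℕ} (h : m ≤ n) :
    bell m = ∑ k ∈ range (n + 1), Nat.stirlingSecond m k := by
  rw [bell, S2_eq_stirlingSecond]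
  exact sum_subset (range_subset_range.2 (by omega)) fun k _ hk =>
    Nat.stirlingSecond_eq_zero_of_lt (by simpa using hk)

theorem bell_succ_eq_sum_choose (n : ℕ) :
    bell (n + 1) = ∑ m ∈ range (n + 1), n.choose m * bell m :=
  calc bell (n + 1)
      = ∑ k ∈ range (n + 1), ∑ m ∈ range (n + 1), n.choose m * Nat.stirlingSecond m k := by
        simp [bell_eq_sum_stirlingSecond_of_le le_rfl, sum_range_succ' _ (n + 1),
          Nat.stirlingSecond_succ_succ_eq_sum_choose]
    _ = ∑ m ∈ range (n + 1), n.choose m * bell m := by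
        rw [sum_comm]
        refine sum_congr rfl fun m hm => ?_
        rw [← mul_sum, bell_eq_sum_stirlingSecond_of_le (Nat.lt_succ_iff.mp (mem_range.mp hm))]

def binomialTransform {R : Type*} [Semiring R] (c : ℕ → R) (n : ℕ) : R :=
  ∑ m ∈ range (n + 1), (n.choose m : R) * c m

theorem binomialTransform_succ {R : Type*} [Semiring R] (c : ℕ → R) (n : ℕ) :
    binomialTransform c (n + 1) = binomialTransform (fun m => c m + c (m + 1)) n := by
  simp only [binomialTransform, mul_add, sum_add_distrib]
  exact sum_choose_succ_mul (fun m _ => c m) n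

theorem sum_choose_mul_neg_one_pow_mul_binomialTransform {R : Type*} [CommRing R] (c : ℕ → R)
    (n : ℕ) :
    ∑ k ∈ range (n + 1), (n.choose k : R) * (-1) ^ k * binomialTransform c k =
      (-1) ^ n * c n := by
  induction n generalizing c with
  | zero => simp [binomialTransform]
  | succ n ih =>
    have hpascal := sum_choose_succ_mul (fun k _ => (-1 : R) ^ k * binomialTransform c k) n
    simp only [← mul_assoc, pow_succ, binomialTransform_succ] at hpascal
    calc _ = ∑ k ∈ range (n + 1), (n.choose k : R) * (-1) ^ k * binomialTransform c k -
          ∑ k ∈ range (n + 1), (n.choose k : R) * (-1) ^ k *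
            binomialTransform (fun m => c m + c (m + 1)) k := by
          rw [hpascal, sub_eq_add_neg, ← sum_neg_distrib]
          simp
      _ = (-1) ^ (n + 1) * c (n + 1) := by
          rw [ih, ih]
          ring

theorem neg_one_pow_mul_numDerangements_succ (k : ℕ) :
    (-1 : ℤ) ^ (k + 1) * numDerangements (k + 1) =
      1 - (k + 1) * ((-1) ^ k * numDerangements k) := by
  have hsq : (-1 : ℤ) ^ k * (-1) ^ k = 1 := by rw [← mul_pow]; simp
  rw [numDerangements_succ]
  linear_combination hsq

theorem sum_stirlingSecond_mul_neg_one_pow_mul_numDerangements_succ (n : ℕ) :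
    ∑ k ∈ range (n + 2), (Nat.stirlingSecond (n + 1) k : ℤ) * (-1) ^ k * numDerangements k =
      bell n -
        ∑ k ∈ range (n + 1), (Nat.stirlingSecond n k : ℤ) * (-1) ^ k * numDerangements k := by
  simp only [mul_assoc, Nat.sum_range_stirlingSecond_succ_mul,
    neg_one_pow_mul_numDerangements_succ, bell_eq_sum_stirlingSecond_of_le le_rfl,
    Nat.cast_sum, ← sum_sub_distrib]
  exact sum_congr rfl fun k _ => by ring

theorem sum_choose_mul_neg_one_pow_mul_bell_succ (n : ℕ) :
    ∑ k ∈ range (n + 2), ((n + 1).choose k : ℤ) * (-1) ^ k * bell k =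
      ∑ k ∈ range (n + 1), (n.choose k : ℤ) * (-1) ^ k * bell k +
        (-1) ^ (n + 1) * bell n := by
  have hbell : ∀ k, (bell (k + 1) : ℤ) = binomialTransform (fun m => (bell m : ℤ)) k := by
    intro k
    simp [bell_succ_eq_sum_choose, binomialTransform]
  have hpascal := sum_choose_succ_mul (fun k _ => (-1 : ℤ) ^ k * bell k) n
  simp only [← mul_assoc] at hpascal
  rw [hpascal, add_right_inj]
  calc ∑ k ∈ range (n + 1), (n.choose k : ℤ) * (-1) ^ (k + 1) * bell (k + 1)
      = -∑ k ∈ range (n + 1), (n.choose k : ℤ) * (-1) ^ k *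
          binomialTransform (fun m => (bell m : ℤ)) k := by
        simp [pow_succ, hbell]
    _ = (-1) ^ (n + 1) * bell n := by
        rw [sum_choose_mul_neg_one_pow_mul_binomialTransform]
        ring

theorem stirling2_derangement_transform (n : ℕ) :
    (-1 : ℤ) ^ n *
        ∑ k ∈ Finset.range (n + 1), (S2 n k : ℤ) * (-1) ^ k * (numDerangements k : ℤ) =
      ∑ k ∈ Finset.range (n + 1), (Nat.choose n k : ℤ) * (-1) ^ k * (bell k : ℤ) := by
  rw [S2_eq_stirlingSecond]
  induction n with
  | zero => simp [bell, S2]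
  | succ n ih =>
    rw [sum_stirlingSecond_mul_neg_one_pow_mul_numDerangements_succ,
      sum_choose_mul_neg_one_pow_mul_bell_succ, ← ih]
    ring
end
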